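/- arXiv:1609.01549 — 2 statements merged into one kernel-verified Lean document; each statement's English description precedes it below -/
import Mathlib

section
/- Let (g,[·,·,·]) be a 3-Lie algebra over K and (ρ,ν) a generalized representation of g on a K-vector space V (i.e., (G1)–(G6) hold). Then for all x1,x2,x3 ∈ g and v1,v2 ∈ V: ν([x1,x2,x3])(v1,v2) = ρ(x2,x3)(ν(x1)(v1,v2)) + ρ(x3,x1)(ν(x2)(v1,v2)) + ρ(x1,x2)(ν(x3)(v1,v2)). -/
/-- For a generalized representation `(ρ,ν)` of a 3-Lie algebra `g` on `V`,
`ν([x1,x2,x3]) = ρ(x2,x3)∘ν(x1) + ρ(x3,x1)∘ν(x2) + ρ(x1,x2)∘ν(x3)` on pairs of vectors. -/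
theorem nu_of_bracket_eq_sum_rho_nu
    {K : Type*} [Field K] [CharZero K] {g V : Type*}
    [AddCommGroup g] [Module K g] [AddCommGroup V] [Module K V]
    (br : g →ₗ[K] g →ₗ[K] g →ₗ[K] g)
    (halt1 : ∀ x y, br x x y = 0) (halt2 : ∀ x y, br x y y = 0)
    (halt3 : ∀ x y, br x y x = 0)
    (hFI : ∀ x1 x2 x3 x4 x5, br x1 x2 (br x3 x4 x5) =
      br (br x1 x2 x3) x4 x5 + br x3 (br x1 x2 x4) x5 + br x3 x4 (br x1 x2 x5))
    (ρ : g →ₗ[K] g →ₗ[K] Module.End K V)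
    (hρalt : ∀ x, ρ x x = 0)
    (ν : g →ₗ[K] V →ₗ[K] V →ₗ[K] V)
    (hνalt : ∀ x v, ν x v v = 0)
    (hG1 : ∀ x1 x2 x3 x4 (v : V), ρ x1 x2 (ρ x3 x4 v) =
      ρ (br x1 x2 x3) x4 v + ρ x3 (br x1 x2 x4) v + ρ x3 x4 (ρ x1 x2 v))
    (hG2 : ∀ x1 x2 x3 x4 (v : V), ρ x1 (br x2 x3 x4) v =
      ρ x3 x4 (ρ x1 x2 v) - ρ x2 x4 (ρ x1 x3 v) + ρ x2 x3 (ρ x1 x4 v))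
    (hG3 : ∀ x1 x2 x3 (v1 v2 : V), ρ x1 x2 (ν x3 v1 v2) =
      ν (br x1 x2 x3) v1 v2 + ν x3 (ρ x1 x2 v1) v2 + ν x3 v1 (ρ x1 x2 v2))
    (hG4 : ∀ x1 x2 x3 (v1 v2 : V), ν x1 v1 (ρ x2 x3 v2) =
      ν x3 v2 (ρ x2 x1 v1) + ν x2 (ρ x3 x1 v1) v2 + ρ x2 x3 (ν x1 v1 v2))
    (hG5 : ∀ x1 x2 (v1 v2 v3 : V), ν x1 v1 (ν x2 v2 v3) =
      ν x2 (ν x1 v1 v2) v3 + ν x2 v2 (ν x1 v1 v3))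
    (hG6 : ∀ x1 x2 (v1 v2 v3 : V), ν x1 (ν x2 v1 v2) v3 = ν x2 (ν x1 v1 v2) v3) :
    ∀ x1 x2 x3 (v1 v2 : V), ν (br x1 x2 x3) v1 v2 =
      ρ x2 x3 (ν x1 v1 v2) + ρ x3 x1 (ν x2 v1 v2) + ρ x1 x2 (ν x3 v1 v2) := by
  -- skew-symmetry of ν in its two vector arguments
  have sw_v : ∀ x (v w : V), ν x v w = - ν x w v := by
    intro x v w
    have h := hνalt x (v + w)
    simp only [map_add, LinearMap.add_apply, hνalt] at h
    linear_combination (norm := module) h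
  -- skew-symmetry of ρ (pointwise)
  have sw_r : ∀ x y (v : V), ρ x y v = - ρ y x v := by
    intro x y v
    have h : ρ (x + y) (x + y) v = 0 := by rw [hρalt]; rfl
    simp only [map_add, LinearMap.add_apply, hρalt, LinearMap.zero_apply] at h
    linear_combination (norm := module) h
  -- swaps for the bracket
  have sw12 : ∀ x y z, br x y z = - br y x z := by
    intro x y z
    have h := halt1 (x + y) z
    simp only [map_add, LinearMap.add_apply, halt1, LinearMap.zero_apply] at h
    linear_combination (norm := module) h
  have sw23 : ∀ x y z, br x y z = - br x z y := by
    intro x y z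
    have h := halt2 x (y + z)
    simp only [map_add, LinearMap.add_apply, halt2, map_zero] at h
    linear_combination (norm := module) h
  have cyc : ∀ x y z, br y z x = br x y z := by
    intro x y z
    linear_combination (norm := module) sw23 y z x - sw12 y x z
  intro x1 x2 x3 v1 v2
  have e1 := hG3 x2 x3 x1 v1 v2
  rw [cyc x1 x2 x3] at e1
  have e2 := hG3 x3 x1 x2 v1 v2
  rw [cyc x2 x3 x1, cyc x1 x2 x3] at e2
  have e3 := hG3 x1 x2 x3 v1 v2
  -- auxiliary identity (A): ν([x1,x2,x3])(v1,v2) = -(a1+a2+a3)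
  have hx : ν x2 (ρ x1 x3 v1) v2 = - ν x2 (ρ x3 x1 v1) v2 := by
    rw [sw_r x1 x3 v1, map_neg, LinearMap.neg_apply]
  have hA : ν (br x1 x2 x3) v1 v2 = -(ν x1 (ρ x2 x3 v1) v2
      + ν x2 (ρ x3 x1 v1) v2 + ν x3 (ρ x1 x2 v1) v2) := by
    have g4 := hG4 x3 x1 x2 v1 v2
    have s := sw_v x2 v2 (ρ x1 x3 v1)
    linear_combination (norm := module) -e3 - g4 - s + hx
  -- same identity with v1, v2 swapped
  have hx' : ν x2 (ρ x1 x3 v2) v1 = - ν x2 (ρ x3 x1 v2) v1 := by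
    rw [sw_r x1 x3 v2, map_neg, LinearMap.neg_apply]
  have hA' : ν (br x1 x2 x3) v2 v1 = -(ν x1 (ρ x2 x3 v2) v1
      + ν x2 (ρ x3 x1 v2) v1 + ν x3 (ρ x1 x2 v2) v1) := by
    have g4 := hG4 x3 x1 x2 v2 v1
    have s := sw_v x2 v1 (ρ x1 x3 v2)
    have e3' := hG3 x1 x2 x3 v2 v1
    linear_combination (norm := module) -e3' - g4 - s + hx'
  have hA2 : ν (br x1 x2 x3) v1 v2 = ν x1 (ρ x2 x3 v2) v1
      + ν x2 (ρ x3 x1 v2) v1 + ν x3 (ρ x1 x2 v2) v1 := by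
    have s := sw_v (br x1 x2 x3) v1 v2
    linear_combination (norm := module) s - hA'
  have s1 := sw_v x1 v1 (ρ x2 x3 v2)
  have s2 := sw_v x2 v1 (ρ x3 x1 v2)
  have s3 := sw_v x3 v1 (ρ x1 x2 v2)
  linear_combination (norm := module) -e1 - e2 - e3 - hA - hA2 - s1 - s2 - s3
end

section
/- Let ĝ and g be 3-Lie algebras over K, let p: ĝ → g be a surjective homomorphism of 3-Lie algebras whose kernel V := ker p is abelian (i.e., [u,v,w]_ĝ = 0 for all u,v,w ∈ V), and suppose there exists a homomorphism of 3-Lie algebras σ: g → ĝ with p∘σ = id_g (a split abelian extension). Define ρ: g×g → End(V) by ρ(x,y)(u) = [σ(x),σ(y),u]_ĝ and ν: g → Hom(V×V,V) by ν(x)(u,v) = [σ(x),u,v]_ĝ (these take values in V). Then (ρ,ν) is a generalized representation of g on V, and the linear map φ: g⊕V → ĝ, φ(x+v) = σ(x)+v, is an isomorphism of 3-Lie algebras from the generalized semidirect product (g⊕V, [·,·,·]_{(ρ,ν)}) onto ĝ, where [x1+v1, x2+v2, x3+v3]_{(ρ,ν)} = [x1,x2,x3] + ρ(x1,x2)v3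 + ρ(x3,x1)v2 + ρ(x2,x3)v1 + ν(x1)(v2,v3) + ν(x2)(v3,v1) + ν(x3)(v1,v2). -/
set_option maxHeartbeats 1600000 in
/-- A split abelian extension `0 → V → ĝ → g → 0` of 3-Lie algebras gives rise
to a generalized representation `(ρ,ν)` of `g` on `V = ker p`, and
`φ(x+v) = σ(x)+v` is an isomorphism from the generalized semidirect product onto `ĝ`. -/
theorem split_abelian_extension_is_generalized_semidirect_product
    {K : Type*} [Field K] [CharZero K] {gh g : Type*}
    [AddCommGroup gh] [Module K gh] [AddCommGroup g] [Module K g]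
    (brh : gh →ₗ[K] gh →ₗ[K] gh →ₗ[K] gh)
    (hhalt1 : ∀ x y, brh x x y = 0) (hhalt2 : ∀ x y, brh x y y = 0)
    (hhalt3 : ∀ x y, brh x y x = 0)
    (hhFI : ∀ x1 x2 x3 x4 x5, brh x1 x2 (brh x3 x4 x5) =
      brh (brh x1 x2 x3) x4 x5 + brh x3 (brh x1 x2 x4) x5 + brh x3 x4 (brh x1 x2 x5))
    (br : g →ₗ[K] g →ₗ[K] g →ₗ[K] g)
    (halt1 : ∀ x y, br x x y = 0) (halt2 : ∀ x y, br x y y = 0)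
    (halt3 : ∀ x y, br x y x = 0)
    (hFI : ∀ x1 x2 x3 x4 x5, br x1 x2 (br x3 x4 x5) =
      br (br x1 x2 x3) x4 x5 + br x3 (br x1 x2 x4) x5 + br x3 x4 (br x1 x2 x5))
    (p : gh →ₗ[K] g) (hpsurj : Function.Surjective p)
    (hphom : ∀ a b c, p (brh a b c) = br (p a) (p b) (p c))
    (habelian : ∀ u v w : LinearMap.ker p, brh (u : gh) (v : gh) (w : gh) = 0)
    (σ : g →ₗ[K] gh)
    (hσhom : ∀ x y z, σ (br x y z) = brh (σ x) (σ y) (σ z))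
    (hσsec : ∀ x, p (σ x) = x) :
    ∃ (ρ : g →ₗ[K] g →ₗ[K] Module.End K (LinearMap.ker p))
      (ν : g →ₗ[K] (LinearMap.ker p) →ₗ[K] (LinearMap.ker p) →ₗ[K] (LinearMap.ker p)),
      (∀ (x y : g) (u : LinearMap.ker p), (ρ x y u : gh) = brh (σ x) (σ y) (u : gh)) ∧
      (∀ (x : g) (u v : LinearMap.ker p), (ν x u v : gh) = brh (σ x) (u : gh) (v : gh)) ∧
      (∀ x, ρ x x = 0) ∧
      (∀ x (u : LinearMap.ker p), ν x u u = 0) ∧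
      -- (G1)
      (∀ x1 x2 x3 x4 (v : LinearMap.ker p), ρ x1 x2 (ρ x3 x4 v) =
         ρ (br x1 x2 x3) x4 v + ρ x3 (br x1 x2 x4) v + ρ x3 x4 (ρ x1 x2 v)) ∧
      -- (G2)
      (∀ x1 x2 x3 x4 (v : LinearMap.ker p), ρ x1 (br x2 x3 x4) v =
         ρ x3 x4 (ρ x1 x2 v) - ρ x2 x4 (ρ x1 x3 v) + ρ x2 x3 (ρ x1 x4 v)) ∧
      -- (G3)
      (∀ x1 x2 x3 (v1 v2 : LinearMap.ker p), ρ x1 x2 (ν x3 v1 v2) =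
         ν (br x1 x2 x3) v1 v2 + ν x3 (ρ x1 x2 v1) v2 + ν x3 v1 (ρ x1 x2 v2)) ∧
      -- (G4)
      (∀ x1 x2 x3 (v1 v2 : LinearMap.ker p), ν x1 v1 (ρ x2 x3 v2) =
         ν x3 v2 (ρ x2 x1 v1) + ν x2 (ρ x3 x1 v1) v2 + ρ x2 x3 (ν x1 v1 v2)) ∧
      -- (G5)
      (∀ x1 x2 (v1 v2 v3 : LinearMap.ker p), ν x1 v1 (ν x2 v2 v3) =
         ν x2 (ν x1 v1 v2) v3 + ν x2 v2 (ν x1 v1 v3)) ∧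
      -- (G6)
      (∀ x1 x2 (v1 v2 v3 : LinearMap.ker p),
         ν x1 (ν x2 v1 v2) v3 = ν x2 (ν x1 v1 v2) v3) ∧
      -- φ is an isomorphism of 3-Lie algebras
      Function.Bijective (fun xv : g × LinearMap.ker p => σ xv.1 + (xv.2 : gh)) ∧
      (∀ a b c : g × LinearMap.ker p,
        σ (br a.1 b.1 c.1)
          + ((ρ a.1 b.1 c.2 + ρ c.1 a.1 b.2 + ρ b.1 c.1 a.2
              + ν a.1 b.2 c.2 + ν b.1 c.2 a.2 + ν c.1 a.2 b.2 : LinearMap.ker p) : gh)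
        = brh (σ a.1 + (a.2 : gh)) (σ b.1 + (b.2 : gh)) (σ c.1 + (c.2 : gh))) := by

  classical
  -- gh-level skew-symmetry
  have sw12 : ∀ a b c : gh, brh a b c = - brh b a c := by
    intro a b c
    have h := hhalt1 (a + b) c
    simp only [map_add, LinearMap.add_apply, hhalt1, zero_add, add_zero] at h
    exact eq_neg_of_add_eq_zero_right h
  have sw23 : ∀ a b c : gh, brh a b c = - brh a c b := by
    intro a b c
    have h := hhalt2 a (b + c)
    simp only [map_add, LinearMap.add_apply, hhalt2, zero_add, add_zero] at h
    exact eq_neg_of_add_eq_zero_right h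
  have cyc : ∀ a b c : gh, brh a b c = brh b c a := by
    intro a b c
    rw [sw12 a b c, sw23 b a c, neg_neg]
  have cyc2 : ∀ a b c : gh, brh a b c = brh c a b := by
    intro a b c
    rw [cyc, cyc]
  have hab' : ∀ u v w : gh, u ∈ LinearMap.ker p → v ∈ LinearMap.ker p →
      w ∈ LinearMap.ker p → brh u v w = 0 := fun u v w hu hv hw =>
    habelian ⟨u, hu⟩ ⟨v, hv⟩ ⟨w, hw⟩
  have hρmem : ∀ (x y : g), ∀ u ∈ LinearMap.ker p, brh (σ x) (σ y) u ∈ LinearMap.ker p := by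
    intro x y u hu
    simp only [LinearMap.mem_ker] at hu ⊢
    rw [hphom, hσsec, hσsec, hu]
    simp
  have hνmem : ∀ (x : g) (u v : gh), u ∈ LinearMap.ker p → v ∈ LinearMap.ker p →
      brh (σ x) u v ∈ LinearMap.ker p := by
    intro x u v hu hv
    simp only [LinearMap.mem_ker] at hu hv ⊢
    rw [hphom, hσsec, hu, hv]
    simp
  have hmid : ∀ (x y : g) (u : gh), u ∈ LinearMap.ker p →
      brh (σ x) u (σ y) ∈ LinearMap.ker p := by
    intro x y u hu
    simp only [LinearMap.mem_ker] at hu ⊢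
    rw [hphom, hσsec, hσsec, hu]
    simp
  set ρ : g →ₗ[K] g →ₗ[K] Module.End K (LinearMap.ker p) :=
    LinearMap.mk₂ K (fun x y => (brh (σ x) (σ y)).restrict (hρmem x y))
      (by intro x x' y
          refine LinearMap.ext fun u => Subtype.ext ?_
          simp [LinearMap.restrict_coe_apply, map_add, LinearMap.add_apply])
      (by intro c x y
          refine LinearMap.ext fun u => Subtype.ext ?_
          simp [LinearMap.restrict_coe_apply, map_smul, LinearMap.smul_apply])
      (by intro x y y'
          refine LinearMap.ext fun u => Subtype.ext ?_
          simp [LinearMap.restrict_coe_apply, map_add, LinearMap.add_apply])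
      (by intro c x y
          refine LinearMap.ext fun u => Subtype.ext ?_
          simp [LinearMap.restrict_coe_apply, map_smul, LinearMap.smul_apply])
    with hρdef
  have hρ : ∀ (x y : g) (u : LinearMap.ker p), ((ρ x y u : LinearMap.ker p) : gh)
      = brh (σ x) (σ y) (u : gh) := by
    intro x y u
    rfl
  set ν : g →ₗ[K] (LinearMap.ker p) →ₗ[K] (LinearMap.ker p) →ₗ[K] (LinearMap.ker p) :=
    { toFun := fun x => LinearMap.mk₂ K
        (fun u v => (⟨brh (σ x) u v, hνmem x u v u.2 v.2⟩ : LinearMap.ker p))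
        (by intro u u' v; apply Subtype.ext; simp [map_add, LinearMap.add_apply])
        (by intro c u v; apply Subtype.ext; simp [map_smul, LinearMap.smul_apply])
        (by intro u v v'; apply Subtype.ext; simp [map_add])
        (by intro c u v; apply Subtype.ext; simp [map_smul])
      map_add' := by
        intro x x'
        refine LinearMap.ext fun u => LinearMap.ext fun v => Subtype.ext ?_
        simp [map_add, LinearMap.add_apply]
      map_smul' := by
        intro c x
        refine LinearMap.ext fun u => LinearMap.ext fun v => Subtype.ext ?_
        simp [map_smul, LinearMap.smul_apply] }
    with hνdef
  have hν : ∀ (x : g) (u v : LinearMap.ker p), ((ν x u v : LinearMap.ker p) : gh)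
      = brh (σ x) (u : gh) (v : gh) := by
    intro x u v
    rfl
  refine ⟨ρ, ν, hρ, hν, ?_, ?_, ?_, ?_, ?_, ?_, ?_, ?_, ?_, ?_⟩
  · -- ρ x x = 0
    intro x
    refine LinearMap.ext fun u => Subtype.ext ?_
    simp [hρ, hhalt1]
  · -- ν x u u = 0
    intro x u
    apply Subtype.ext
    simp [hν, hhalt2]
  · -- G1
    intro x1 x2 x3 x4 v
    apply Subtype.ext
    simp only [Submodule.coe_add, hρ, hσhom]
    exact hhFI _ _ _ _ _
  · -- G2
    intro x1 x2 x3 x4 v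
    apply Subtype.ext
    simp only [AddSubgroupClass.coe_sub, Submodule.coe_add, hρ, hσhom]
    rw [show brh (σ x1) (brh (σ x2) (σ x3) (σ x4)) (v : gh)
        = brh (v : gh) (σ x1) (brh (σ x2) (σ x3) (σ x4)) from (cyc _ _ _).symm]
    rw [hhFI (v : gh) (σ x1) (σ x2) (σ x3) (σ x4)]
    rw [cyc (v : gh) (σ x1) (σ x2), cyc (v : gh) (σ x1) (σ x3), cyc (v : gh) (σ x1) (σ x4)]
    rw [cyc (brh (σ x1) (σ x2) (v : gh)) (σ x3) (σ x4)]
    rw [sw23 (σ x2) (brh (σ x1) (σ x3) (v : gh)) (σ x4)]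
    abel
  · -- G3
    intro x1 x2 x3 v1 v2
    apply Subtype.ext
    simp only [Submodule.coe_add, hρ, hν, hσhom]
    exact hhFI _ _ _ _ _
  · -- G4
    intro x1 x2 x3 v1 v2
    apply Subtype.ext
    simp only [Submodule.coe_add, hρ, hν]
    rw [hhFI (σ x1) (v1 : gh) (σ x2) (σ x3) (v2 : gh)]
    rw [cyc2 (σ x1) (v1 : gh) (σ x2), cyc2 (σ x1) (v1 : gh) (σ x3)]
    rw [cyc (brh (σ x2) (σ x1) (v1 : gh)) (σ x3) (v2 : gh)]
  · -- G5
    intro x1 x2 v1 v2 v3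
    apply Subtype.ext
    simp only [Submodule.coe_add, hν]
    rw [hhFI (σ x1) (v1 : gh) (σ x2) (v2 : gh) (v3 : gh)]
    rw [hab' _ _ _ (hmid x1 x2 _ v1.2) v2.2 v3.2, zero_add]
  · -- G6
    intro x1 x2 v1 v2 v3
    apply Subtype.ext
    simp only [hν]
    have e1 : brh (σ x2) (v1 : gh) (brh (σ x1) (v2 : gh) (v3 : gh))
        = brh (σ x1) (brh (σ x2) (v1 : gh) (v2 : gh)) (v3 : gh)
          + brh (σ x1) (v2 : gh) (brh (σ x2) (v1 : gh) (v3 : gh)) := by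
      rw [hhFI (σ x2) (v1 : gh) (σ x1) (v2 : gh) (v3 : gh)]
      rw [hab' _ _ _ (hmid x2 x1 _ v1.2) v2.2 v3.2, zero_add]
    have e2 : brh (σ x1) (v2 : gh) (brh (σ x2) (v1 : gh) (v3 : gh))
        = - brh (σ x2) (brh (σ x1) (v1 : gh) (v2 : gh)) (v3 : gh)
          + brh (σ x2) (v1 : gh) (brh (σ x1) (v2 : gh) (v3 : gh)) := by
      rw [hhFI (σ x1) (v2 : gh) (σ x2) (v1 : gh) (v3 : gh)]
      rw [hab' _ _ _ (hmid x1 x2 _ v2.2) v1.2 v3.2, zero_add]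
      rw [sw23 (σ x1) (v2 : gh) (v1 : gh)]
      simp only [map_neg, LinearMap.neg_apply]
    have e3 : brh (σ x1) (brh (σ x2) (v1 : gh) (v2 : gh)) (v3 : gh)
        = brh (σ x2) (v1 : gh) (brh (σ x1) (v2 : gh) (v3 : gh))
          - brh (σ x1) (v2 : gh) (brh (σ x2) (v1 : gh) (v3 : gh)) := by
      rw [e1]; abel
    rw [e3, e2]
    abel
  · -- bijectivity of φ
    constructor
    · intro a b hab
      dsimp only at hab
      have h1 : a.1 = b.1 := by
        have h := congrArg p hab
        simpa [map_add, hσsec, LinearMap.mem_ker.mp a.2.2,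
          LinearMap.mem_ker.mp b.2.2] using h
      rw [h1] at hab
      have h2 : (a.2 : gh) = b.2 := add_left_cancel hab
      exact Prod.ext h1 (Subtype.ext h2)
    · intro y
      refine ⟨(p y, ⟨y - σ (p y), ?_⟩), ?_⟩
      · simp [LinearMap.mem_ker, map_sub, hσsec]
      · dsimp only
        abel
  · -- φ is a homomorphism
    intro a b c
    simp only [Submodule.coe_add, hρ, hν, hσhom, map_add, LinearMap.add_apply]
    rw [cyc2 (σ a.1) ((b.2 : gh)) (σ c.1)]
    rw [cyc ((a.2 : gh)) (σ b.1) (σ c.1)]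
    rw [cyc ((a.2 : gh)) (σ b.1) ((c.2 : gh))]
    rw [cyc2 ((a.2 : gh)) ((b.2 : gh)) (σ c.1)]
    rw [hab' _ _ _ a.2.2 b.2.2 c.2.2]
    abel
end
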